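/- If multiplication by n equals repeated addition of n, then strong and weak divisibility by n are equivalent: a set A is strongly divisible by n if and only if it is weakly divisible by n. -/

import Mathlib

/-- Multiplication by `n` equals repeated addition of `n`. -/
def MulEqRepeatedAdd (n : ℕ) : Prop :=
  ∀ (B U : Type) (X : B → Set U), Pairwise (Function.onFun Disjoint X) →
    (∀ b, Nonempty (X b ≃ Fin n)) → Nonempty ((⋃ b, X b) ≃ B × Fin n)

/-- `A` is strongly divisible by `n`. -/
def StronglyDivisible (n : ℕ) (A : Type) : Prop :=
  ∃ B : Type, Nonempty (A ≃ B × Fin n)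

/-- `A` is weakly divisible by `n`. -/
def WeaklyDivisible (n : ℕ) (A : Type) : Prop :=
  ∃ (B U : Type) (X : B → Set U), Pairwise (Function.onFun Disjoint X) ∧
    (∀ b, Nonempty (X b ≃ Fin n)) ∧ Nonempty (A ≃ (⋃ b, X b))

/-! A product `B × Fin n` is the disjoint union of the fibers of `Prod.fst`, each of size `n`,
so strong divisibility always gives weak divisibility; the converse is exactly what
`MulEqRepeatedAdd n` provides. -/

def Equiv.preimageFstSingleton {α β : Type*} (a : α) : (Prod.fst ⁻¹' {a} : Set (α × β)) ≃ β where
  toFun p := p.1.2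
  invFun b := ⟨(a, b), rfl⟩
  left_inv := by rintro ⟨⟨a', b⟩, (rfl : a' = a)⟩; rfl
  right_inv _ := rfl

theorem Set.iUnion_preimage_fst_singleton (α β : Type*) :
    (⋃ a : α, Prod.fst ⁻¹' {a} : Set (α × β)) = Set.univ := by
  rw [← Set.preimage_iUnion, Set.iUnion_of_singleton, Set.preimage_univ]

theorem StronglyDivisible.weaklyDivisible {n : ℕ} {A : Type} (h : StronglyDivisible n A) :
    WeaklyDivisible n A := by
  obtain ⟨B, ⟨e⟩⟩ := h
  refine ⟨B, B × Fin n, fun b => Prod.fst ⁻¹' {b}, pairwise_disjoint_fiber Prod.fst,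
    fun b => ⟨Equiv.preimageFstSingleton b⟩, ⟨?_⟩⟩
  exact e.trans ((Equiv.Set.univ _).symm.trans
    (Equiv.setCongr (Set.iUnion_preimage_fst_singleton B (Fin n)).symm))

theorem WeaklyDivisible.stronglyDivisible {n : ℕ} {A : Type} (hmul : MulEqRepeatedAdd n)
    (h : WeaklyDivisible n A) : StronglyDivisible n A := by
  obtain ⟨B, U, X, hdisj, hcard, ⟨e⟩⟩ := h
  obtain ⟨f⟩ := hmul B U X hdisj hcard
  exact ⟨B, ⟨e.trans f⟩⟩

theorem mulEqRepeatedAdd_implies_div_equiv_general (n : ℕ)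
    (hmul : MulEqRepeatedAdd n) :
    ∀ A : Type, StronglyDivisible n A ↔ WeaklyDivisible n A :=
  fun _ => ⟨StronglyDivisible.weaklyDivisible, WeaklyDivisible.stronglyDivisible hmul⟩

theorem mulEqRepeatedAdd_implies_div_equiv (n : ℕ) (hn : 0 < n)
    (hmul : MulEqRepeatedAdd n) :
    ∀ A : Type, StronglyDivisible n A ↔ WeaklyDivisible n A :=
  mulEqRepeatedAdd_implies_div_equiv_general n hmul
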